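/- arXiv:2103.05859 — 3 statements merged into one kernel-verified Lean document; each statement's English description precedes it below -/
import Mathlib

section
/- Let R be a finite commutative ring and C ⊆ Rᵐ × Rⁿ a double cyclic code of length (m, n), i.e., an R-submodule closed under the simultaneous cyclic shift T(c¹₀,…,c¹_{m-1} | c²₀,…,c²_{n-1}) = (c¹_{m-1},c¹₀,…,c¹_{m-2} | c²_{n-1},c²₀,…,c²_{n-2}). Then the dual code C^⊥ = { d ∈ Rᵐ × Rⁿ : ⟨d, c⟩ = 0 for all c ∈ C } is also closed under T, hence is a double cyclic code of length (m, n). -/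
/-!
The shift `T` is injective, and it maps the finite set `C` into itself, so it permutes `C`.
Hence every `c ∈ C` is `T c'` for some `c' ∈ C`, and since `T` permutes the coordinates of both
arguments of the inner product simultaneously, `⟨T d, T c'⟩ = ⟨d, c'⟩ = 0`.
-/

theorem dual_of_double_cyclic_is_double_cyclic_general
    (R : Type*) [CommRing R] [Fintype R] (m n : ℕ)
    (T : ((Fin m → R) × (Fin n → R)) → ((Fin m → R) × (Fin n → R)))
    (hT : ∀ c, T c = (c.1 ∘ (finRotate m).symm, c.2 ∘ (finRotate n).symm))
    (C : Submodule R ((Fin m → R) × (Fin n → R)))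
    (hC : ∀ c ∈ C, T c ∈ C)
    (d : (Fin m → R) × (Fin n → R))
    (hd : ∀ c ∈ C, (∑ i, d.1 i * c.1 i) + (∑ j, d.2 j * c.2 j) = 0) :
    ∀ c ∈ C, (∑ i, (T d).1 i * c.1 i) + (∑ j, (T d).2 j * c.2 j) = 0 := by
  have hT_inj : Function.Injective T := by
    rw [show T = Prod.map (· ∘ (finRotate m).symm) (· ∘ (finRotate n).symm) from funext hT]
    exact (finRotate m).symm.surjective.injective_comp_right.prodMap
      (finRotate n).symm.surjective.injective_comp_right
  have hT_surjOn : Set.SurjOn T C C :=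
    ((Set.toFinite (C : Set _)).injOn_iff_bijOn_of_mapsTo fun c hc => hC c hc).mp
      hT_inj.injOn |>.surjOn
  rintro _ hTc
  obtain ⟨c, hc, rfl⟩ := hT_surjOn hTc
  rw [hT, hT]
  simpa only [Function.comp_apply, (finRotate m).symm.sum_comp fun i => d.1 i * c.1 i,
    (finRotate n).symm.sum_comp fun j => d.2 j * c.2 j] using hd c hc

theorem dual_of_double_cyclic_is_double_cyclic
    (R : Type*) [CommRing R] [Fintype R] (m n : ℕ) (hm : 1 ≤ m) (hn : 1 ≤ n)
    (T : ((Fin m → R) × (Fin n → R)) → ((Fin m → R) × (Fin n → R)))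
    (hT : ∀ c, T c = (c.1 ∘ (finRotate m).symm, c.2 ∘ (finRotate n).symm))
    (C : Submodule R ((Fin m → R) × (Fin n → R)))
    (hC : ∀ c ∈ C, T c ∈ C)
    (d : (Fin m → R) × (Fin n → R))
    (hd : ∀ c ∈ C, (∑ i, d.1 i * c.1 i) + (∑ j, d.2 j * c.2 j) = 0) :
    ∀ c ∈ C, (∑ i, (T d).1 i * c.1 i) + (∑ j, (T d).2 j * c.2 j) = 0 :=
  dual_of_double_cyclic_is_double_cyclic_general R m n T hT C hC d hd
end

section
/- Let F be a field and m, n, l ≥ 1 with m ∣ l and n ∣ l. Suppose c¹(x), d¹(x) ∈ F[x] (of degree < m) and the identity c¹(x)·ω_{l/m}(x^m)·x^l·d¹*(x) ≡ 0 (mod x^l − 1) holds, where ω_k(y) = Σ_{i=0}^{k-1} yⁱ and d¹* is the reciprocal of d¹. Then c¹(x)·d¹*(x) ≡ 0 (mod x^m − 1). -/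
open Polynomial Finset

/-! Since `ω_{l/m}(x^m) · (x^m - 1) = x^l - 1`, cancelling the nonzero factor `ω_{l/m}(x^m)` in a
domain leaves `x^m - 1 ∣ c · d* · x^l`, and `x^m - 1` is coprime to `x`. -/

theorem geom_sum_pow_mul_pow_sub_one {R : Type*} [Ring R] (x : R) {m l : ℕ} (hml : m ∣ l) :
    (∑ i ∈ range (l / m), (x ^ m) ^ i) * (x ^ m - 1) = x ^ l - 1 := by
  rw [geom_sum_mul, ← pow_mul, Nat.mul_div_cancel' hml]

theorem isCoprime_X_pow_sub_one_X {R : Type*} [CommRing R] {m : ℕ} (hm : m ≠ 0) :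
    IsCoprime ((X : R[X]) ^ m - 1) X := by
  refine ⟨-1, X ^ (m - 1), ?_⟩
  rw [← pow_succ, Nat.sub_add_cancel (Nat.one_le_iff_ne_zero.mpr hm)]
  ring

theorem X_pow_sub_one_dvd_of_dvd_mul_X_pow {R : Type*} [CommRing R] {m k : ℕ} (hm : m ≠ 0)
    {a : R[X]} (h : (X : R[X]) ^ m - 1 ∣ a * X ^ k) : (X : R[X]) ^ m - 1 ∣ a :=
  ((isCoprime_X_pow_sub_one_X hm).pow_right).dvd_of_dvd_mul_right h

theorem X_pow_sub_one_dvd_of_dvd_geom_sum_mul {R : Type*} [CommRing R] [IsDomain R] {m l : ℕ}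
    (hl : l ≠ 0) (hml : m ∣ l) {a : R[X]}
    (h : (X : R[X]) ^ l - 1 ∣ (∑ i ∈ range (l / m), ((X : R[X]) ^ m) ^ i) * a) :
    (X : R[X]) ^ m - 1 ∣ a := by
  have hfactor := geom_sum_pow_mul_pow_sub_one (X : R[X]) hml
  have hsum_ne_zero : ∑ i ∈ range (l / m), ((X : R[X]) ^ m) ^ i ≠ 0 := by
    refine left_ne_zero_of_mul (b := (X : R[X]) ^ m - 1) ?_
    rw [hfactor]
    simpa using X_pow_sub_C_ne_zero (Nat.pos_of_ne_zero hl) (1 : R)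
  rwa [← hfactor, mul_dvd_mul_iff_left hsum_ne_zero] at h

theorem mod_xl_sub_one_to_mod_xm_sub_one_general
    (F : Type*) [Field F] (m l : ℕ) (hm : 1 ≤ m) (hl : 1 ≤ l)
    (hml : m ∣ l)
    (c d : Polynomial F)
    (h : ((X : F[X]) ^ l - 1) ∣
      c * (∑ i ∈ range (l / m), ((X : F[X]) ^ m) ^ i) * (X : F[X]) ^ l * d.reverse) :
    ((X : F[X]) ^ m - 1) ∣ c * d.reverse := by
  have h' : (X : F[X]) ^ l - 1 ∣
      (∑ i ∈ range (l / m), ((X : F[X]) ^ m) ^ i) * (c * d.reverse * X ^ l) := by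
    convert h using 1
    ring
  exact X_pow_sub_one_dvd_of_dvd_mul_X_pow (by omega)
    (X_pow_sub_one_dvd_of_dvd_geom_sum_mul (by omega) hml h')

theorem mod_xl_sub_one_to_mod_xm_sub_one
    (F : Type*) [Field F] (m n l : ℕ) (hm : 1 ≤ m) (hn : 1 ≤ n) (hl : 1 ≤ l)
    (hml : m ∣ l) (hnl : n ∣ l)
    (c d : Polynomial F) (hc : c.natDegree < m) (hd : d.natDegree < m)
    (h : ((X : F[X]) ^ l - 1) ∣
      c * (∑ i ∈ range (l / m), ((X : F[X]) ^ m) ^ i) * (X : F[X]) ^ l * d.reverse) :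
    ((X : F[X]) ^ m - 1) ∣ c * d.reverse :=
  mod_xl_sub_one_to_mod_xm_sub_one_general F m l hm hl hml c d h
end

section
/- Let F be a field, m, n ≥ 1, and C ⊆ F[x]/⟨x^m−1⟩ × F[x]/⟨x^n−1⟩ an F[x]-submodule (a double cyclic code of length (m,n)). Then there exist polynomials ι(x), ℓ(x) ∈ F[x] and θ(x) ∈ F[x] such that ι(x) ∣ x^m − 1, θ(x) ∣ x^n − 1, and C is generated as an F[x]-module by the two elements (ι(x) | 0) and (ℓ(x) | θ(x)). -/
/-!
Project `C` onto its second coordinate: the image is an ideal of `F[x]/⟨xⁿ - 1⟩`, so, `F[x]` being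
a principal ideal domain, it is generated by the class of some `θ ∣ xⁿ - 1`; lift it to
`(ℓ | θ) ∈ C`. Every element of `C` differs from a multiple of `(ℓ | θ)` by an element of the
kernel `{(c | 0) ∈ C}`, which is likewise generated by `(ι | 0)` for some `ι ∣ xᵐ - 1`.
-/

open Polynomial

namespace Submodule

variable {R M N : Type*} [CommRing R] [AddCommGroup M] [Module R M] [AddCommGroup N] [Module R N]

theorem eq_map_inl_comap_inl_sup_span_singleton (C : Submodule R (M × N)) {c : M × N} (hc : c ∈ C)
    (hsnd : C.map (LinearMap.snd R M N) = R ∙ c.2) :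
    C = (C.comap (LinearMap.inl R M N)).map (LinearMap.inl R M N) ⊔ R ∙ c := by
  refine le_antisymm (fun x hx => ?_)
    (sup_le (map_comap_le _ _) ((span_singleton_le_iff_mem _ _).2 hc))
  obtain ⟨r, hr⟩ : ∃ r : R, r • c.2 = x.2 :=
    mem_span_singleton.1 (hsnd ▸ mem_map_of_mem (f := LinearMap.snd R M N) hx)
  have hker : (x.1 - r • c.1, (0 : N)) ∈ C := by
    convert C.sub_mem hx (C.smul_mem r hc) using 1
    ext <;> simp [hr]
  refine mem_sup.2 ⟨LinearMap.inl R M N (x.1 - r • c.1), mem_map_of_mem hker,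
    r • c, smul_mem _ _ (mem_span_singleton_self c), ?_⟩
  ext <;> simp [hr]

theorem exists_dvd_eq_span_singleton_mk [IsPrincipalIdealRing R] (a : R)
    (K : Submodule R (R ⧸ Ideal.span {a})) :
    ∃ ι : R, ι ∣ a ∧ K = R ∙ Ideal.Quotient.mk _ ι := by
  let π := (Ideal.span {a}).mkQ
  obtain ⟨ι, hι⟩ := (IsPrincipalIdealRing.principal (K.comap π)).principal
  have ha : a ∈ K.comap π := by simp [π]
  refine ⟨ι, ?_, ?_⟩
  · rw [hι] at ha
    exact Ideal.mem_span_singleton.1 ha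
  · rw [← map_comap_eq_of_surjective (mkQ_surjective _) K, hι, map_span, Set.image_singleton]
    rfl

end Submodule

open Submodule in
theorem double_cyclic_generators_general
    (F : Type*) [Field F] (m n : ℕ)
    (C : Submodule F[X]
      ((F[X] ⧸ Ideal.span {(X : F[X]) ^ m - 1}) × (F[X] ⧸ Ideal.span {(X : F[X]) ^ n - 1}))) :
    ∃ ι ℓ θ : F[X], ι ∣ (X : F[X]) ^ m - 1 ∧ θ ∣ (X : F[X]) ^ n - 1 ∧
      C = Submodule.span F[X]
        {(Ideal.Quotient.mk (Ideal.span {(X : F[X]) ^ m - 1}) ι, 0),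
         (Ideal.Quotient.mk (Ideal.span {(X : F[X]) ^ m - 1}) ℓ,
          Ideal.Quotient.mk (Ideal.span {(X : F[X]) ^ n - 1}) θ)} := by
  obtain ⟨θ, hθ, hsnd⟩ := exists_dvd_eq_span_singleton_mk _ (C.map (LinearMap.snd _ _ _))
  obtain ⟨ι, hι, hker⟩ := exists_dvd_eq_span_singleton_mk _ (C.comap (LinearMap.inl _ _ _))
  obtain ⟨⟨c₁, _⟩, hc, rfl⟩ := hsnd.ge (mem_span_singleton_self _)
  obtain ⟨ℓ, rfl⟩ := Ideal.Quotient.mk_surjective c₁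
  refine ⟨ι, ℓ, θ, hι, hθ, ?_⟩
  rw [span_insert]
  convert C.eq_map_inl_comap_inl_sup_span_singleton hc hsnd using 2
  rw [hker, map_span, Set.image_singleton]
  rfl

theorem double_cyclic_generators
    (F : Type*) [Field F] (m n : ℕ) (hm : 1 ≤ m) (hn : 1 ≤ n)
    (C : Submodule F[X]
      ((F[X] ⧸ Ideal.span {(X : F[X]) ^ m - 1}) × (F[X] ⧸ Ideal.span {(X : F[X]) ^ n - 1}))) :
    ∃ ι ℓ θ : F[X], ι ∣ (X : F[X]) ^ m - 1 ∧ θ ∣ (X : F[X]) ^ n - 1 ∧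
      C = Submodule.span F[X]
        {(Ideal.Quotient.mk (Ideal.span {(X : F[X]) ^ m - 1}) ι, 0),
         (Ideal.Quotient.mk (Ideal.span {(X : F[X]) ^ m - 1}) ℓ,
          Ideal.Quotient.mk (Ideal.span {(X : F[X]) ^ n - 1}) θ)} :=
  double_cyclic_generators_general F m n C
end
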